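/- arXiv:2112.01788 — 3 statements merged into one kernel-verified Lean document; each statement's English description precedes it below -/
import Mathlib

section
/- Let k ≥ 1 be a positive integer and define Θ_{k,1} : [0,∞) → [0,∞) by Θ_{k,1}(t) = t/(g(t)·(g∘g)(t)⋯g^{∘k}(t)), where g(t) = log(e+t) and g^{∘k} denotes k-fold composition. Then the associated sequence M_p = sup_{t≥0} t^p e^{−Θ_{k,1}(t)} is a sequence of positive finite real numbers which is logarithmically convex and quasi-analytic, i.e. ∑_{p≥1} M_{p−1}/M_p = +∞. -/
open MeasureTheory Filter
open scoped ENNReal NNReal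

noncomputable section

abbrev Esp (d : ℕ) := EuclideanSpace ℝ (Fin d)

/-- Japanese bracket `⟨x⟩ = (1+‖x‖²)^{1/2}`. -/
def jap {d : ℕ} (x : Esp d) : ℝ := Real.sqrt (1 + ‖x‖ ^ 2)

/-- First-order partial derivative in direction `i`. -/
def pderivI {d : ℕ} (i : Fin d) (f : Esp d → ℂ) : Esp d → ℂ :=
  fun x => fderiv ℝ f x (EuclideanSpace.single i 1)

/-- Multi-index partial derivative `∂^β`. -/
def mderiv {d : ℕ} (β : Fin d → ℕ) (f : Esp d → ℂ) : Esp d → ℂ :=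
  Fin.foldr d (fun i g => (pderivI i)^[β i] g) f

/-- `ρ` is a contraction mapping: `|ρ(x)-ρ(y)| ≤ L‖x-y‖` for some `0 ≤ L < 1`. -/
def IsContractionMap {d : ℕ} (ρ : Esp d → ℝ) : Prop :=
  ∃ L : ℝ, 0 ≤ L ∧ L < 1 ∧ ∀ x y : Esp d, |ρ x - ρ y| ≤ L * ‖x - y‖

/-- `ω` is `γ`-thick with respect to the density `ρ`. -/
def IsThick {d : ℕ} (γ : ℝ) (ρ : Esp d → ℝ) (ω : Set (Esp d)) : Prop :=
  ∀ x : Esp d, ENNReal.ofReal γ * volume (Metric.ball x (ρ x)) ≤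
    volume (ω ∩ Metric.ball x (ρ x))

/-- The Bang degree `n_{t,M,r}`. -/
def bangDeg (M : ℕ → ℝ) (t r : ℝ) : ℕ :=
  sSup {N : ℕ | (∑ n ∈ Finset.Icc 1 N, if -Real.log t < (n : ℝ) then M (n - 1) / M n else 0) < r}

/-- `γ_M(p) = sup_{1≤j≤p} j (M_{j+1}M_{j-1}/M_j² - 1)`. -/
def gammaM (M : ℕ → ℝ) (p : ℕ) : ℝ :=
  ⨆ j : {j : ℕ // 1 ≤ j ∧ j ≤ p}, (j : ℝ) * (M (j + 1) * M (j - 1) / (M j) ^ 2 - 1)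

/-- `Γ_M(p) = 4 e^{4+4γ_M(p)}`. -/
def GammaM (M : ℕ → ℝ) (p : ℕ) : ℝ := 4 * Real.exp (4 + 4 * gammaM M p)

/-- Quasi-analyticity: `∑_{p≥1} M_{p-1}/M_p = +∞`. -/
def QuasiAnalytic (M : ℕ → ℝ) : Prop :=
  Tendsto (fun N => ∑ p ∈ Finset.Icc 1 N, M (p - 1) / M p) atTop atTop

/-- The standard one-dimensional Hermite functions. -/
def hermite1 (k : ℕ) (x : ℝ) : ℝ :=
  ((-1 : ℝ) ^ k / Real.sqrt (2 ^ k * k.factorial * Real.sqrt Real.pi)) *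
    Real.exp (x ^ 2 / 2) * iteratedDeriv k (fun y => Real.exp (-y ^ 2)) x

/-- The `d`-dimensional Hermite functions `Φ_α`. -/
def hermiteFun {d : ℕ} (α : Fin d → ℕ) (x : Esp d) : ℝ :=
  ∏ j, hermite1 (α j) (x j)

/-- The Hermite coefficient `⟨f, Φ_α⟩_{L²(ℝ^d)}`. -/
def hermiteCoeff {d : ℕ} (f : Esp d → ℂ) (α : Fin d → ℕ) : ℂ :=
  ∫ x, f x * ((hermiteFun α x : ℝ) : ℂ)

/-- The set of values whose supremum defines `M_p = sup_{t ≥ 0} t^p e^{-Θ(t)}`. -/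
def MseqSet (Θ : ℝ → ℝ) (p : ℕ) : Set ℝ :=
  {y : ℝ | ∃ t : ℝ, 0 ≤ t ∧ y = t ^ p * Real.exp (-Θ t)}

/-- The sequence `M_p = sup_{t ≥ 0} t^p e^{-Θ(t)}` associated with `Θ`. -/
def Mseq (Θ : ℝ → ℝ) (p : ℕ) : ℝ := sSup (MseqSet Θ p)

/-- The square of the norm of the weighted Gelfand–Shilov space `GS_Θ`,
`‖f‖²_{GS_Θ} = ∑_α e^{2Θ(|α|)} |⟨f,Φ_α⟩|²`. -/
def GSThetaNormSq {d : ℕ} (Θ : ℝ → ℝ) (f : Esp d → ℂ) : ℝ≥0∞ :=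
  ∑' α : Fin d → ℕ,
    ENNReal.ofReal (Real.exp (2 * Θ ((∑ i, α i : ℕ) : ℝ)) * ‖hermiteCoeff f α‖ ^ 2)

/-- `g(t) = log(e+t)`. -/
def gfun (t : ℝ) : ℝ := Real.log (Real.exp 1 + t)

/-- `Θ_{k,1}(t) = t / (g(t)(g∘g)(t)⋯g^{∘k}(t))`. -/
def ThetaK1 (k : ℕ) (t : ℝ) : ℝ := t / ∏ j ∈ Finset.Icc 1 k, gfun^[j] t

/-!
Write `Θ(t) = t / L(t)` with `L = g · (g ∘ g) ⋯ g^{∘k}`. Since `L` grows only polylogarithmically,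
`Θ(t)` eventually exceeds `p log t`, so every `M_p` is finite; log-convexity holds for any
sequence of this form, because `(t^p e^{-Θ})² = (t^{p+1} e^{-Θ}) (t^{p-1} e^{-Θ})` pointwise.

For quasi-analyticity, `Θ(s) ≤ p` at `s = p L(p)`, so `M_p ≥ s^p e^{-p}`. At `T = A s`, with
`A = 2^{k+1} (k+2)`, one has `L(T) ≤ 2^k L(p)`, hence `Θ(T) ≥ 2(k+2)p`; from there on
`t^p e^{-Θ(t)}` decreases and stays below `M_p / 2`. So only `t ≤ T` matters in the supremum,
giving `M_p ≤ T M_{p-1}`, i.e. `M_{p-1}/M_p ≥ 1/(A p L(p))`. By the mean value theorem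
`1/(p L(p))` dominates the increment of `g^{∘(k+1)}` on `[p, p+1]`, and `g^{∘(k+1)}(p) → ∞`.
-/

open Real Finset

section Mseq

variable {Θ : ℝ → ℝ} {p : ℕ}

lemma le_Mseq (hbdd : BddAbove (MseqSet Θ p)) {t : ℝ} (ht : 0 ≤ t) :
    t ^ p * exp (-Θ t) ≤ Mseq Θ p :=
  le_csSup hbdd ⟨t, ht, rfl⟩

lemma Mseq_pos (hbdd : BddAbove (MseqSet Θ p)) : 0 < Mseq Θ p :=
  (exp_pos _).trans_le (by simpa using le_Mseq hbdd zero_le_one)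

lemma bddAbove_MseqSet (hΘ : ∀ t, 0 ≤ t → 0 ≤ Θ t)
    (hgrowth : ∀ᶠ t in atTop, t ^ p ≤ exp (Θ t)) : BddAbove (MseqSet Θ p) := by
  obtain ⟨T, hT⟩ := eventually_atTop.1 hgrowth
  refine ⟨max (max T 0 ^ p) 1, ?_⟩
  rintro _ ⟨t, ht, rfl⟩
  rcases le_total t T with htT | hTt
  · refine le_max_of_le_left ?_
    calc t ^ p * exp (-Θ t) ≤ t ^ p * 1 := by
          gcongr; exact exp_le_one_iff.2 (neg_nonpos.2 (hΘ t ht))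
      _ ≤ max T 0 ^ p := by rw [mul_one]; gcongr; exact le_max_of_le_left htT
  · refine le_max_of_le_right ?_
    rw [exp_neg, ← div_eq_mul_inv, div_le_one (exp_pos _)]
    exact hT t hTt

lemma Mseq_sq_le_mul (hbdd_succ : BddAbove (MseqSet Θ (p + 1)))
    (hbdd_pred : BddAbove (MseqSet Θ (p - 1))) (hp : 1 ≤ p) :
    Mseq Θ p ^ 2 ≤ Mseq Θ (p + 1) * Mseq Θ (p - 1) := by
  have hR : 0 ≤ Mseq Θ (p + 1) * Mseq Θ (p - 1) :=
    (mul_pos (Mseq_pos hbdd_succ) (Mseq_pos hbdd_pred)).le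
  refine (le_sqrt (Real.sSup_nonneg fun _ hy => ?_) hR).1 (Real.sSup_le ?_ (sqrt_nonneg _))
  · obtain ⟨t, ht, rfl⟩ := hy
    positivity
  rintro _ ⟨t, ht, rfl⟩
  refine (le_sqrt (by positivity) hR).2 ?_
  calc (t ^ p * exp (-Θ t)) ^ 2
      = (t ^ (p + 1) * exp (-Θ t)) * (t ^ (p - 1) * exp (-Θ t)) := by
        rw [mul_mul_mul_comm, ← pow_add, show p + 1 + (p - 1) = p * 2 by omega, pow_mul]
        ring
    _ ≤ Mseq Θ (p + 1) * Mseq Θ (p - 1) :=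
        mul_le_mul (le_Mseq hbdd_succ ht) (le_Mseq hbdd_pred ht) (by positivity)
          (Mseq_pos hbdd_succ).le

lemma Mseq_le_mul_Mseq_pred (hbdd_pred : BddAbove (MseqSet Θ (p - 1))) (hp : 1 ≤ p)
    (hpos : 0 < Mseq Θ p) {T : ℝ} (hT : 0 ≤ T)
    (htail : ∀ t, T ≤ t → t ^ p * exp (-Θ t) ≤ Mseq Θ p / 2) :
    Mseq Θ p ≤ T * Mseq Θ (p - 1) := by
  have hsup : Mseq Θ p ≤ max (T * Mseq Θ (p - 1)) (Mseq Θ p / 2) := by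
    refine Real.sSup_le ?_ (le_max_of_le_right (by positivity))
    rintro _ ⟨t, ht, rfl⟩
    rcases le_total t T with htT | hTt
    · refine le_max_of_le_left ?_
      calc t ^ p * exp (-Θ t) = t * (t ^ (p - 1) * exp (-Θ t)) := by
            rw [← mul_assoc, ← pow_succ', Nat.sub_add_cancel hp]
        _ ≤ T * Mseq Θ (p - 1) := by
            gcongr
            exact le_Mseq hbdd_pred ht
    · exact le_max_of_le_right (htail t hTt)
  rcases le_max_iff.1 hsup with h | h
  · exact h
  · linarith

end Mseq

lemma tendsto_sum_Icc_atTop_of_sub_le {a F : ℕ → ℝ} (hF : Tendsto F atTop atTop)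
    (h : ∀ᶠ p in atTop, F (p + 1) - F p ≤ a p) :
    Tendsto (fun N => ∑ p ∈ Icc 1 N, a p) atTop atTop := by
  obtain ⟨p₀, hp₀⟩ := eventually_atTop.1 h
  have key : ∀ N, p₀ ≤ N →
      F (N + 1) + (∑ p ∈ Icc 1 p₀, a p - F (p₀ + 1)) ≤ ∑ p ∈ Icc 1 N, a p := by
    intro N hN
    induction N, hN using Nat.le_induction with
    | base => linarith
    | succ N hN ih =>
      rw [sum_Icc_succ_top (by omega)]
      linarith [hp₀ (N + 1) (by omega)]
  refine tendsto_atTop_mono' atTop ?_ (tendsto_atTop_add_const_right _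
    (∑ p ∈ Icc 1 p₀, a p - F (p₀ + 1)) (hF.comp (tendsto_add_atTop_nat 1)))
  filter_upwards [eventually_ge_atTop p₀] with N hN using key N hN

section gfun

lemma one_le_gfun {t : ℝ} (ht : 0 ≤ t) : 1 ≤ gfun t := by
  rw [gfun, le_log_iff_exp_le (by positivity)]
  linarith

lemma gfun_le_gfun {s t : ℝ} (hs : 0 ≤ s) (h : s ≤ t) : gfun s ≤ gfun t :=
  log_le_log (by positivity) (by linarith)

lemma gfun_le_add_one {t : ℝ} (ht : 0 ≤ t) : gfun t ≤ t + 1 := by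
  rw [gfun, log_le_iff_le_exp (by positivity), exp_add, mul_comm]
  nlinarith [add_one_le_exp t, one_le_exp (zero_le_one' ℝ)]

lemma gfun_le_two_mul_gfun {s t : ℝ} (hs : 0 ≤ s) (h : exp 1 + s ≤ (exp 1 + t) ^ 2) :
    gfun s ≤ 2 * gfun t :=
  calc gfun s ≤ log ((exp 1 + t) ^ 2) := log_le_log (by positivity) h
    _ = 2 * gfun t := by rw [log_pow, gfun]; norm_num

lemma tendsto_gfun_atTop : Tendsto gfun atTop atTop :=
  tendsto_log_atTop.comp (tendsto_atTop_add_const_left _ _ tendsto_id)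

lemma eventually_mul_pow_gfun_le (C : ℝ) (n : ℕ) : ∀ᶠ t in atTop, C * gfun t ^ n ≤ t := by
  have hc : (0 : ℝ) < 1 / (2 * (|C| + 1)) := by positivity
  have hlog := ((isLittleO_pow_log_id_atTop (n := n)).comp_tendsto
    (tendsto_atTop_add_const_left _ (exp 1) tendsto_id)).def hc
  filter_upwards [hlog, eventually_ge_atTop (exp 1)] with t hlogt hte
  have hg : 0 ≤ log (exp 1 + t) := zero_le_one.trans (one_le_gfun ((exp_pos 1).le.trans hte))
  have het : 0 < exp 1 + t := by linarith [exp_pos 1]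
  simp only [Function.comp_apply, id, norm_pow, norm_eq_abs, abs_of_nonneg hg,
    abs_of_pos het] at hlogt
  calc C * gfun t ^ n ≤ (|C| + 1) * gfun t ^ n := by
        gcongr; linarith [le_abs_self C]
    _ ≤ (|C| + 1) * (1 / (2 * (|C| + 1)) * (exp 1 + t)) := by gcongr; exact hlogt
    _ = (exp 1 + t) / 2 := by field_simp
    _ ≤ t := by linarith

lemma gfun_iterate_nonneg (j : ℕ) {t : ℝ} (ht : 0 ≤ t) : 0 ≤ gfun^[j] t := by
  induction j with
  | zero => exact ht
  | succ j ih => rw [Function.iterate_succ_apply']; exact zero_le_one.trans (one_le_gfun ih)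

lemma one_le_gfun_iterate {j : ℕ} (hj : 1 ≤ j) {t : ℝ} (ht : 0 ≤ t) : 1 ≤ gfun^[j] t := by
  obtain ⟨i, rfl⟩ := Nat.exists_eq_add_of_le' hj
  rw [Function.iterate_succ_apply']
  exact one_le_gfun (gfun_iterate_nonneg i ht)

lemma gfun_iterate_le_gfun_iterate (j : ℕ) {s t : ℝ} (hs : 0 ≤ s) (h : s ≤ t) :
    gfun^[j] s ≤ gfun^[j] t := by
  induction j with
  | zero => exact h
  | succ j ih =>
    rw [Function.iterate_succ_apply', Function.iterate_succ_apply']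
    exact gfun_le_gfun (gfun_iterate_nonneg j hs) ih

lemma gfun_iterate_le_mul {j : ℕ} (hj : 1 ≤ j) {t : ℝ} (ht : 0 ≤ t) :
    gfun^[j] t ≤ j * gfun t := by
  induction j, hj using Nat.le_induction with
  | base => simp
  | succ j hj ih =>
    rw [Function.iterate_succ_apply']
    push_cast
    linarith [gfun_le_add_one (gfun_iterate_nonneg j ht), one_le_gfun ht]

lemma gfun_iterate_le_two_mul {j : ℕ} (hj : 1 ≤ j) {s t : ℝ} (hs : 0 ≤ s) (ht : 0 ≤ t)
    (h : gfun s ≤ 2 * gfun t) : gfun^[j] s ≤ 2 * gfun^[j] t := by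
  induction j, hj using Nat.le_induction with
  | base => simpa using h
  | succ j hj ih =>
    rw [Function.iterate_succ_apply', Function.iterate_succ_apply']
    have hjt := gfun_iterate_nonneg j ht
    calc gfun (gfun^[j] s) ≤ gfun (2 * gfun^[j] t) := gfun_le_gfun (gfun_iterate_nonneg j hs) ih
      _ ≤ 2 * gfun (gfun^[j] t) :=
          gfun_le_two_mul_gfun (by positivity) (by nlinarith [add_one_le_exp 1])

end gfun

section logProd

def logProd (k : ℕ) (t : ℝ) : ℝ := ∏ j ∈ Icc 1 k, gfun^[j] t

lemma ThetaK1_eq_div_logProd (k : ℕ) (t : ℝ) : ThetaK1 k t = t / logProd k t := rfl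

variable {k : ℕ} {s t : ℝ}

lemma logProd_succ (k : ℕ) (t : ℝ) :
    logProd (k + 1) t = logProd k t * gfun^[k + 1] t :=
  prod_Icc_succ_top (by omega) _

lemma one_le_logProd (k : ℕ) (ht : 0 ≤ t) : 1 ≤ logProd k t :=
  one_le_prod fun _ hj => one_le_gfun_iterate (mem_Icc.1 hj).1 ht

lemma logProd_pos (k : ℕ) (ht : 0 ≤ t) : 0 < logProd k t :=
  zero_lt_one.trans_le (one_le_logProd k ht)

lemma logProd_le_logProd (k : ℕ) (hs : 0 ≤ s) (h : s ≤ t) : logProd k s ≤ logProd k t :=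
  prod_le_prod (fun j _ => gfun_iterate_nonneg j hs)
    fun j _ => gfun_iterate_le_gfun_iterate j hs h

lemma gfun_le_logProd (hk : 1 ≤ k) (ht : 0 ≤ t) : gfun t ≤ logProd k t := by
  have h1 : 1 ∈ Icc 1 k := mem_Icc.2 ⟨le_rfl, hk⟩
  rw [logProd, ← prod_erase_mul _ _ h1, Function.iterate_one]
  exact le_mul_of_one_le_left (zero_le_one.trans (one_le_gfun ht))
    (one_le_prod fun j hj => one_le_gfun_iterate (mem_Icc.1 (mem_of_mem_erase hj)).1 ht)

lemma logProd_le_pow (k : ℕ) (ht : 0 ≤ t) : logProd k t ≤ (k * gfun t) ^ k := by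
  calc logProd k t ≤ ∏ _ ∈ Icc 1 k, (k * gfun t) :=
        prod_le_prod (fun j _ => gfun_iterate_nonneg j ht) fun _ hj =>
          (gfun_iterate_le_mul (mem_Icc.1 hj).1 ht).trans (by
            gcongr
            · exact zero_le_one.trans (one_le_gfun ht)
            · exact_mod_cast (mem_Icc.1 hj).2)
    _ = (k * gfun t) ^ k := by simp

lemma logProd_le_two_pow_mul (k : ℕ) (hs : 0 ≤ s) (ht : 0 ≤ t) (h : gfun s ≤ 2 * gfun t) :
    logProd k s ≤ 2 ^ k * logProd k t := by
  calc logProd k s ≤ ∏ j ∈ Icc 1 k, 2 * gfun^[j] t :=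
        prod_le_prod (fun j _ => gfun_iterate_nonneg j hs)
          fun j hj => gfun_iterate_le_two_mul (mem_Icc.1 hj).1 hs ht h
    _ = 2 ^ k * logProd k t := by simp [prod_mul_distrib, logProd]

lemma hasDerivAt_gfun (h : 0 < exp 1 + t) : HasDerivAt gfun (exp 1 + t)⁻¹ t := by
  refine (((hasDerivAt_id t).const_add (exp 1)).log h.ne').congr_deriv ?_
  simp

def gfunIterDeriv (j : ℕ) (t : ℝ) : ℝ := ∏ i ∈ range j, (exp 1 + gfun^[i] t)⁻¹

lemma hasDerivAt_gfun_iterate (j : ℕ) (ht : 0 ≤ t) :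
    HasDerivAt (gfun^[j]) (gfunIterDeriv j t) t := by
  induction j with
  | zero => simpa [gfunIterDeriv] using hasDerivAt_id t
  | succ j ih =>
    have h := (hasDerivAt_gfun (by linarith [exp_pos 1, gfun_iterate_nonneg j ht])).comp t ih
    rw [gfunIterDeriv, prod_range_succ, mul_comm]
    rwa [Function.iterate_succ']

lemma gfunIterDeriv_succ_le (j : ℕ) (ht : 0 ≤ t) :
    gfunIterDeriv (j + 1) t ≤ ((exp 1 + t) * logProd j t)⁻¹ := by
  induction j with
  | zero => simp [gfunIterDeriv, logProd]
  | succ j ih =>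
    have hg := one_le_gfun_iterate (Nat.le_add_left 1 j) ht
    calc gfunIterDeriv (j + 1 + 1) t
        = gfunIterDeriv (j + 1) t * (exp 1 + gfun^[j + 1] t)⁻¹ := prod_range_succ _ _
      _ ≤ ((exp 1 + t) * logProd j t)⁻¹ * (gfun^[j + 1] t)⁻¹ := by
          gcongr
          · have := logProd_pos j ht
            positivity
          · linarith [exp_pos 1]
      _ = ((exp 1 + t) * logProd (j + 1) t)⁻¹ := by rw [logProd_succ, ← mul_inv, mul_assoc]

lemma gfunIterDeriv_mul_le {j : ℕ} (hj : 1 ≤ j) (ht : 0 ≤ t) :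
    gfunIterDeriv j t * ((exp 1 + t) * gfun t) ≤ gfun^[j] t := by
  obtain ⟨i, rfl⟩ := Nat.exists_eq_add_of_le' hj
  have hL := logProd_pos i ht
  have het : 0 < exp 1 + t := by linarith [exp_pos 1]
  calc gfunIterDeriv (i + 1) t * ((exp 1 + t) * gfun t)
      ≤ ((exp 1 + t) * logProd i t)⁻¹ * ((exp 1 + t) * gfun t) := by
        gcongr
        · exact mul_nonneg het.le (zero_le_one.trans (one_le_gfun ht))
        · exact gfunIterDeriv_succ_le i ht
    _ = gfun t / logProd i t := by field_simp
    _ ≤ logProd (i + 1) t / logProd i t := by gcongr; exact gfun_le_logProd (by omega) ht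
    _ = gfun^[i + 1] t := by rw [logProd_succ]; field_simp

lemma exists_hasDerivAt_logProd (k : ℕ) (ht : 0 ≤ t) :
    ∃ d, HasDerivAt (logProd k) d t ∧ t * d * gfun t ≤ k * logProd k t := by
  set P : ℕ → ℝ := fun j => ∏ i ∈ (Icc 1 k).erase j, gfun^[i] t
  refine ⟨∑ j ∈ Icc 1 k, P j * gfunIterDeriv j t,
    HasDerivAt.fun_finsetProd fun j _ => hasDerivAt_gfun_iterate j ht, ?_⟩
  have hg := one_le_gfun ht
  calc t * (∑ j ∈ Icc 1 k, P j * gfunIterDeriv j t) * gfun t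
      ≤ ∑ j ∈ Icc 1 k, P j * (gfunIterDeriv j t * ((exp 1 + t) * gfun t)) := by
        rw [mul_comm t, mul_assoc, sum_mul]
        refine sum_le_sum fun j _ => ?_
        have hP : 0 ≤ P j := prod_nonneg fun i _ => gfun_iterate_nonneg i ht
        have hD : 0 ≤ gfunIterDeriv j t := prod_nonneg fun i _ =>
          inv_nonneg.2 (by linarith [exp_pos 1, gfun_iterate_nonneg i ht])
        rw [mul_assoc]
        gcongr
        linarith [exp_pos 1]
    _ ≤ ∑ j ∈ Icc 1 k, logProd k t := by
        refine sum_le_sum fun j hj => ?_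
        rw [logProd, ← prod_erase_mul _ _ hj]
        exact mul_le_mul_of_nonneg_left (gfunIterDeriv_mul_le (mem_Icc.1 hj).1 ht)
          (prod_nonneg fun i _ => gfun_iterate_nonneg i ht)
    _ = k * logProd k t := by simp

end logProd

lemma antitoneOn_pow_mul_exp_neg {Θ : ℝ → ℝ} {T : ℝ} (p : ℕ) (hT : 0 < T)
    (hΘ : ∀ t, T ≤ t → 0 ≤ Θ t ∧ ∃ θ', HasDerivAt Θ θ' t ∧ Θ t ≤ 2 * t * θ')
    (hp : 2 * p ≤ Θ T) : AntitoneOn (fun t => t ^ p * exp (-Θ t)) (Set.Ici T) := by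
  have hdiff : ∀ t, T ≤ t → DifferentiableAt ℝ Θ t := fun t ht =>
    let ⟨_, ⟨_, hd, _⟩⟩ := hΘ t ht; hd.differentiableAt
  have hmono : MonotoneOn Θ (Set.Ici T) := by
    refine monotoneOn_of_deriv_nonneg (convex_Ici T)
      (fun t ht => (hdiff t ht).continuousAt.continuousWithinAt)
      (fun t ht => (hdiff t (interior_subset ht)).differentiableWithinAt) fun t ht => ?_
    rw [interior_Ici] at ht
    obtain ⟨hΘt, θ', hd, hθ'⟩ := hΘ t ht.le
    rw [hd.deriv]
    nlinarith [hT.trans ht]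
  have hlog : AntitoneOn (fun t => p * log t - Θ t) (Set.Ici T) := by
    refine antitoneOn_of_deriv_nonpos (convex_Ici T)
      (fun t ht => ((continuousAt_log (hT.trans_le ht).ne').const_mul _ |>.sub
        (hdiff t ht).continuousAt).continuousWithinAt)
      (fun t ht => ?_) fun t ht => ?_
    all_goals rw [interior_Ici] at ht
    · exact (((differentiableAt_log (hT.trans ht).ne').const_mul _).sub
        (hdiff t ht.le)).differentiableWithinAt
    · obtain ⟨-, θ', hd, hθ'⟩ := hΘ t ht.le
      have ht0 := hT.trans ht
      rw [(((hasDerivAt_log ht0.ne').const_mul (p : ℝ)).fun_sub hd).deriv, sub_nonpos,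
        ← div_eq_mul_inv, div_le_iff₀ ht0]
      linarith [hp.trans (hmono Set.self_mem_Ici (Set.mem_Ici.2 ht.le) ht.le)]
  intro s hs t ht hst
  have hs0 := hT.trans_le hs
  have ht0 := hT.trans_le ht
  dsimp only
  rw [← exp_log (pow_pos hs0 p), ← exp_log (pow_pos ht0 p), ← exp_add, ← exp_add, log_pow,
    log_pow]
  exact exp_le_exp.2 (by linarith [hlog hs ht hst])

section ThetaK1

variable {k : ℕ} {t : ℝ}

lemma ThetaK1_nonneg (k : ℕ) (ht : 0 ≤ t) : 0 ≤ ThetaK1 k t :=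
  div_nonneg ht (logProd_pos k ht).le

lemma exists_hasDerivAt_ThetaK1 (ht : 0 ≤ t) (hg : 2 * k ≤ gfun t) :
    ∃ θ', HasDerivAt (ThetaK1 k) θ' t ∧ ThetaK1 k t ≤ 2 * t * θ' := by
  obtain ⟨d, hd, hdle⟩ := exists_hasDerivAt_logProd k ht
  have hL := logProd_pos k ht
  refine ⟨_, (hasDerivAt_id t).div hd hL.ne', ?_⟩
  have hg0 : 0 < gfun t := zero_lt_one.trans_le (one_le_gfun ht)
  have htd : 2 * (t * d) ≤ logProd k t := by
    refine le_of_mul_le_mul_right ?_ hg0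
    nlinarith
  calc ThetaK1 k t = t * logProd k t / logProd k t ^ 2 := by
        rw [ThetaK1_eq_div_logProd]; field_simp
    _ ≤ t * (2 * (logProd k t - t * d)) / logProd k t ^ 2 := by gcongr; linarith
    _ = 2 * t * ((1 * logProd k t - id t * d) / logProd k t ^ 2) := by simp only [id]; ring

lemma eventually_pow_le_exp_ThetaK1 (k p : ℕ) :
    ∀ᶠ t in atTop, t ^ p ≤ exp (ThetaK1 k t) := by
  filter_upwards [eventually_mul_pow_gfun_le (p * k ^ k) (k + 1), eventually_ge_atTop 1]
    with t hgrowth ht1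
  have ht0 : (0 : ℝ) ≤ t := zero_le_one.trans ht1
  have hpow : 0 < (k * gfun t) ^ k :=
    zero_lt_one.trans_le ((one_le_logProd k ht0).trans (logProd_le_pow k ht0))
  calc t ^ p = exp (p * log t) := by rw [← log_pow, exp_log (by positivity)]
    _ ≤ exp (p * gfun t) := by
        gcongr
        exact log_le_log (by positivity) (by linarith [exp_pos 1])
    _ ≤ exp (t / (k * gfun t) ^ k) := by
        gcongr
        rw [le_div_iff₀ hpow]
        calc p * gfun t * (k * gfun t) ^ k = p * k ^ k * gfun t ^ (k + 1) := by ring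
          _ ≤ t := hgrowth
    _ ≤ exp (ThetaK1 k t) := by
        gcongr
        exact div_le_div_of_nonneg_left ht0 (logProd_pos k ht0) (logProd_le_pow k ht0)

lemma bddAbove_MseqSet_ThetaK1 (k p : ℕ) : BddAbove (MseqSet (ThetaK1 k) p) :=
  bddAbove_MseqSet (fun _ => ThetaK1_nonneg k) (eventually_pow_le_exp_ThetaK1 k p)

end ThetaK1

lemma two_pow_mul_le_exp (k : ℕ) : (2 : ℝ) ^ (k + 1) * (k + 2) ≤ exp (2 * k + 2) := by
  have h2 : (2 : ℝ) ≤ exp 1 := by linarith [add_one_le_exp (1 : ℝ)]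
  calc (2 : ℝ) ^ (k + 1) * (k + 2) ≤ exp 1 ^ (k + 1) * exp (k + 1) := by
        gcongr
        linarith [add_one_le_exp ((k : ℝ) + 1)]
    _ = exp (2 * k + 2) := by rw [← exp_nat_mul, ← exp_add]; push_cast; ring_nf

section ratio

variable {k p : ℕ}

lemma le_ThetaK1_mul_logProd (hp : 1 ≤ p) (hA : 2 ^ (k + 1) * (k + 2) * logProd k p ≤ p) :
    2 * (k + 2) * p ≤ ThetaK1 k (2 ^ (k + 1) * (k + 2) * p * logProd k p) := by
  set A : ℝ := 2 ^ (k + 1) * (k + 2)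
  set L := logProd k p
  have hp0 : (0 : ℝ) < p := by exact_mod_cast hp
  have hL := one_le_logProd k hp0.le
  have hT0 : 0 ≤ A * p * L := by positivity
  have hLT : logProd k (A * p * L) ≤ 2 ^ k * L := by
    refine logProd_le_two_pow_mul k hT0 hp0.le (gfun_le_two_mul_gfun hT0 ?_)
    have hTp : A * p * L ≤ p ^ 2 := by nlinarith
    nlinarith [add_one_le_exp 1]
  rw [ThetaK1_eq_div_logProd, le_div_iff₀ (logProd_pos k hT0)]
  calc 2 * (k + 2) * p * logProd k (A * p * L) ≤ 2 * (k + 2) * p * (2 ^ k * L) := by gcongr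
    _ = A * p * L := by ring

lemma pow_mul_exp_neg_ThetaK1_le_half (hp : 1 ≤ p)
    (hA : 2 ^ (k + 1) * (k + 2) * logProd k p ≤ p) :
    (2 ^ (k + 1) * (k + 2) * p * logProd k p) ^ p *
        exp (-ThetaK1 k (2 ^ (k + 1) * (k + 2) * p * logProd k p)) ≤ Mseq (ThetaK1 k) p / 2 := by
  set A : ℝ := 2 ^ (k + 1) * (k + 2)
  set L := logProd k p
  have hp1 : (1 : ℝ) ≤ p := by exact_mod_cast hp
  have hp0 : (0 : ℝ) < p := by positivity
  have hL := one_le_logProd k hp0.le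
  have hs0 : 0 ≤ p * L := mul_nonneg hp0.le (zero_le_one.trans hL)
  have hΘs : ThetaK1 k (p * L) ≤ p := by
    rw [ThetaK1_eq_div_logProd, div_le_iff₀ (logProd_pos k hs0)]
    exact mul_le_mul_of_nonneg_left
      (logProd_le_logProd k hp0.le (le_mul_of_one_le_right hp0.le hL)) hp0.le
  -- `A / 2 ^ k = 2 (k + 2)` is what makes `Θ(T)` outweigh `log (2 A ^ p e ^ p) ≤ (2k + 4) p`.
  have hexp : 2 * A ^ p * exp p ≤ exp (ThetaK1 k (A * p * L)) :=
    calc 2 * A ^ p * exp p ≤ exp p * exp (2 * k + 2) ^ p * exp p := by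
          gcongr
          · linarith [add_one_le_exp (p : ℝ)]
          · exact two_pow_mul_le_exp k
      _ = exp (2 * (k + 2) * p) := by
          rw [← exp_nat_mul, ← exp_add, ← exp_add]
          congr 1
          ring
      _ ≤ exp (ThetaK1 k (A * p * L)) := exp_le_exp.2 (le_ThetaK1_mul_logProd hp hA)
  calc (A * p * L) ^ p * exp (-ThetaK1 k (A * p * L))
      = (p * L) ^ p * exp (-p) / 2 * (2 * A ^ p * exp p / exp (ThetaK1 k (A * p * L))) := by
        rw [mul_assoc A, mul_pow, exp_neg, exp_neg]; field_simp
    _ ≤ (p * L) ^ p * exp (-p) / 2 * 1 := by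
        gcongr; exact div_le_one_of_le₀ hexp (exp_pos _).le
    _ ≤ Mseq (ThetaK1 k) p / 2 := by
        rw [mul_one]
        gcongr
        exact (le_Mseq (bddAbove_MseqSet_ThetaK1 k p) hs0).trans' (by gcongr)

lemma Mseq_ThetaK1_le (hp : 1 ≤ p) (hg : 2 * k ≤ gfun p)
    (hA : 2 ^ (k + 1) * (k + 2) * logProd k p ≤ p) :
    Mseq (ThetaK1 k) p ≤
      2 ^ (k + 1) * (k + 2) * p * logProd k p * Mseq (ThetaK1 k) (p - 1) := by
  set A : ℝ := 2 ^ (k + 1) * (k + 2)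
  set L := logProd k p
  have hp0 : (0 : ℝ) < p := by exact_mod_cast hp
  have hL := one_le_logProd k hp0.le
  have hA1 : 1 ≤ A := one_le_mul_of_one_le_of_one_le (one_le_pow₀ one_le_two) (by linarith)
  have hpT : (p : ℝ) ≤ A * p * L := by
    nlinarith [mul_le_mul hA1 hL zero_le_one (zero_le_one.trans hA1)]
  have hΘT : 2 * p ≤ ThetaK1 k (A * p * L) :=
    le_trans (by nlinarith [(Nat.cast_nonneg k : (0 : ℝ) ≤ k)]) (le_ThetaK1_mul_logProd hp hA)
  have hanti := antitoneOn_pow_mul_exp_neg p (T := A * p * L) (hp0.trans_le hpT)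
    (fun t ht => ⟨ThetaK1_nonneg k (hp0.le.trans (hpT.trans ht)),
      exists_hasDerivAt_ThetaK1 (hp0.le.trans (hpT.trans ht))
        (hg.trans (gfun_le_gfun hp0.le (hpT.trans ht)))⟩) hΘT
  exact Mseq_le_mul_Mseq_pred (bddAbove_MseqSet_ThetaK1 k (p - 1)) hp
    (Mseq_pos (bddAbove_MseqSet_ThetaK1 k p)) (by positivity)
    fun t ht => (hanti Set.self_mem_Ici ht ht).trans (pow_mul_exp_neg_ThetaK1_le_half hp hA)

end ratio

lemma eventually_Mseq_ThetaK1_le (k : ℕ) : ∀ᶠ p : ℕ in atTop, Mseq (ThetaK1 k) p ≤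
    2 ^ (k + 1) * (k + 2) * p * logProd k p * Mseq (ThetaK1 k) (p - 1) := by
  have hnat := tendsto_natCast_atTop_atTop (R := ℝ)
  filter_upwards [eventually_ge_atTop 1,
    hnat.eventually (tendsto_gfun_atTop.eventually_ge_atTop (2 * k)),
    hnat.eventually (eventually_mul_pow_gfun_le (2 ^ (k + 1) * (k + 2) * k ^ k) k)]
    with p hp hg hgrowth
  refine Mseq_ThetaK1_le hp hg ?_
  calc 2 ^ (k + 1) * (k + 2) * logProd k p ≤ 2 ^ (k + 1) * (k + 2) * (k * gfun p) ^ k := by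
        gcongr; exact logProd_le_pow k p.cast_nonneg
    _ = 2 ^ (k + 1) * (k + 2) * k ^ k * gfun p ^ k := by ring
    _ ≤ p := hgrowth

lemma gfun_iterate_succ_sub_le (k : ℕ) {x : ℝ} (hx : 0 < x) :
    gfun^[k + 1] (x + 1) - gfun^[k + 1] x ≤ (x * logProd k x)⁻¹ := by
  have hder : ∀ y ∈ Set.Icc x (x + 1),
      HasDerivAt (gfun^[k + 1]) (gfunIterDeriv (k + 1) y) y :=
    fun y hy => hasDerivAt_gfun_iterate (k + 1) (hx.le.trans hy.1)
  have h := (convex_Icc x (x + 1)).image_sub_le_mul_sub_of_deriv_le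
    (fun y hy => (hder y hy).continuousAt.continuousWithinAt)
    (fun y hy => (hder y (interior_subset hy)).differentiableAt.differentiableWithinAt)
    (C := (x * logProd k x)⁻¹) (fun y hy => ?_) x (Set.left_mem_Icc.2 (by linarith))
    (x + 1) (Set.right_mem_Icc.2 (by linarith)) (by linarith)
  · simpa using h
  rw [interior_Icc] at hy
  have hy0 : 0 ≤ y := hx.le.trans hy.1.le
  rw [(hder y (Set.Ioo_subset_Icc_self hy)).deriv]
  refine (gfunIterDeriv_succ_le k hy0).trans (inv_anti₀ (mul_pos hx (logProd_pos k hx.le)) ?_)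
  exact mul_le_mul (by linarith [exp_pos 1, hy.1]) (logProd_le_logProd k hx.le hy.1.le)
    (logProd_pos k hx.le).le (by linarith [exp_pos 1])

lemma quasiAnalytic_Mseq_ThetaK1 (k : ℕ) : QuasiAnalytic (Mseq (ThetaK1 k)) := by
  set A : ℝ := 2 ^ (k + 1) * (k + 2)
  have hA : 0 < A := by positivity
  have hF := ((tendsto_gfun_atTop.iterate (k + 1)).comp
    tendsto_natCast_atTop_atTop).atTop_div_const hA
  refine tendsto_sum_Icc_atTop_of_sub_le (F := fun p : ℕ => gfun^[k + 1] p / A) hF ?_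
  filter_upwards [eventually_Mseq_ThetaK1_le k, eventually_ge_atTop 1] with p hratio hp
  have hp0 : (0 : ℝ) < p := by exact_mod_cast hp
  have hL := logProd_pos k hp0.le
  have hM := Mseq_pos (bddAbove_MseqSet_ThetaK1 k p)
  calc gfun^[k + 1] (p + 1 : ℕ) / A - gfun^[k + 1] p / A
      = (gfun^[k + 1] (p + 1) - gfun^[k + 1] p) / A := by push_cast; ring
    _ ≤ (p * logProd k p)⁻¹ / A := by gcongr; exact gfun_iterate_succ_sub_le k hp0
    _ = 1 / (A * p * logProd k p) := by field_simp
    _ ≤ Mseq (ThetaK1 k) (p - 1) / Mseq (ThetaK1 k) p := by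
        rw [div_le_div_iff₀ (by positivity) hM]
        linarith

theorem stmt_5_general (k : ℕ) :
    (∀ p : ℕ, BddAbove (MseqSet (ThetaK1 k) p) ∧ 0 < Mseq (ThetaK1 k) p) ∧
    (∀ p : ℕ, 1 ≤ p →
      Mseq (ThetaK1 k) p ^ 2 ≤ Mseq (ThetaK1 k) (p + 1) * Mseq (ThetaK1 k) (p - 1)) ∧
    QuasiAnalytic (Mseq (ThetaK1 k)) :=
  ⟨fun p => ⟨bddAbove_MseqSet_ThetaK1 k p, Mseq_pos (bddAbove_MseqSet_ThetaK1 k p)⟩,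
    fun _ hp => Mseq_sq_le_mul (bddAbove_MseqSet_ThetaK1 k _) (bddAbove_MseqSet_ThetaK1 k _) hp,
    quasiAnalytic_Mseq_ThetaK1 k⟩

/-- The sequence associated with `Θ_{k,1}` is a quasi-analytic sequence of positive
(finite) real numbers (Proposition `ex_theta1`). -/
theorem stmt_5 (k : ℕ) (hk : 1 ≤ k) :
    (∀ p : ℕ, BddAbove (MseqSet (ThetaK1 k) p) ∧ 0 < Mseq (ThetaK1 k) p) ∧
    (∀ p : ℕ, 1 ≤ p →
      Mseq (ThetaK1 k) p ^ 2 ≤ Mseq (ThetaK1 k) (p + 1) * Mseq (ThetaK1 k) (p - 1)) ∧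
    QuasiAnalytic (Mseq (ThetaK1 k)) :=
  stmt_5_general k

end
end

section
/- Let d ≥ 1, μ, ν > 0 with μ + ν ≥ 1, 0 ≤ δ ≤ 1, C > 0 and A ≥ 1. If f : ℝ^d → ℂ is a smooth function satisfying ‖⟨x⟩^p ∂_x^β f‖_{L²(ℝ^d)} ≤ C A^{p+|β|} (p!)^ν (|β|!)^μ for all p ∈ ℕ and all multi-indices β ∈ ℕ^d, then for all p ∈ ℕ and β ∈ ℕ^d: ‖⟨x⟩^{δp} ∂_x^β f‖_{L²(ℝ^d)} ≤ C (8^ν e^ν A)^{p+|β|} (p!)^{δν} (|β|!)^μ. -/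
open MeasureTheory Filter
open scoped ENNReal NNReal

noncomputable section

/-!
Since `⟨x⟩ ≥ 1`, the weight `⟨x⟩^{δp}` is dominated by `⟨x⟩^q` with `q = ⌈δp⌉ ≤ p`, so the
hypothesis at order `q` applies; what is left is the Stirling-type estimate
`q! ≤ (2e)^p (p!)^δ`.
-/

open Nat Real

lemma natCeil_mul_le {δ : ℝ} (hδ1 : δ ≤ 1) (p : ℕ) : ⌈δ * p⌉₊ ≤ p :=
  Nat.ceil_le.mpr (mul_le_of_le_one_left (Nat.cast_nonneg p) hδ1)

lemma pow_self_le_exp_mul_factorial (n : ℕ) : (n : ℝ) ^ n ≤ exp n * n ! := by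
  have h := Real.pow_div_factorial_le_exp (n : ℝ) (Nat.cast_nonneg n) n
  rwa [div_le_iff₀ (by positivity)] at h

/-- Since `⌈δp⌉ ≤ δp + 1`, we get `⌈δp⌉! ≤ p^⌈δp⌉ ≤ p · (p^p)^δ ≤ p · e^p (p!)^δ`, and `p ≤ 2^p`. -/
lemma factorial_natCeil_mul_le {δ : ℝ} (hδ0 : 0 ≤ δ) (hδ1 : δ ≤ 1) (p : ℕ) :
    ((⌈δ * p⌉₊ ! : ℕ) : ℝ) ≤ (2 * exp 1) ^ p * (p ! : ℝ) ^ δ := by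
  set q := ⌈δ * p⌉₊
  have hfac_rpow : 1 ≤ (p ! : ℝ) ^ δ := one_le_rpow (by exact_mod_cast p.factorial_pos) hδ0
  have h2e : 1 ≤ 2 * exp 1 := by linarith [add_one_le_exp (1 : ℝ)]
  rcases Nat.eq_zero_or_pos q with hq0 | hq_pos
  · rw [hq0, Nat.factorial_zero, Nat.cast_one]
    exact one_le_mul_of_one_le_of_one_le (one_le_pow₀ h2e) hfac_rpow
  have hqp : q ≤ p := natCeil_mul_le hδ1 p
  have hp : (1 : ℝ) ≤ p := by exact_mod_cast hq_pos.trans_le hqp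
  have hq_le : (q : ℝ) ≤ δ * p + 1 := (Nat.ceil_lt_add_one (by positivity)).le
  have hp_pow : (p : ℝ) ^ (δ * p) ≤ exp p * (p ! : ℝ) ^ δ :=
    calc (p : ℝ) ^ (δ * p) = ((p : ℝ) ^ p) ^ δ := by
          rw [← rpow_natCast, ← rpow_mul (Nat.cast_nonneg p), mul_comm]
      _ ≤ (exp p * p !) ^ δ := rpow_le_rpow (by positivity) (pow_self_le_exp_mul_factorial p) hδ0
      _ = exp (δ * p) * (p ! : ℝ) ^ δ := by
          rw [mul_rpow (exp_pos _).le (Nat.cast_nonneg _), ← exp_mul, mul_comm (p : ℝ)]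
      _ ≤ exp p * (p ! : ℝ) ^ δ := by gcongr; nlinarith
  calc ((q ! : ℕ) : ℝ) ≤ (q : ℝ) ^ q := by exact_mod_cast Nat.factorial_le_pow q
    _ ≤ (p : ℝ) ^ q := by gcongr
    _ = (p : ℝ) ^ (q : ℝ) := (rpow_natCast _ _).symm
    _ ≤ (p : ℝ) ^ (δ * p + 1) := rpow_le_rpow_of_exponent_le hp hq_le
    _ = (p : ℝ) ^ (δ * p) * p := by rw [rpow_add (by linarith), rpow_one]
    _ ≤ exp p * (p ! : ℝ) ^ δ * 2 ^ p := by
        gcongr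
        exact_mod_cast (Nat.lt_two_pow_self (n := p)).le
    _ = (2 * exp 1) ^ p * (p ! : ℝ) ^ δ := by
        rw [mul_pow, ← exp_one_pow]; ring

lemma factorial_natCeil_mul_rpow_le {δ ν : ℝ} (hδ0 : 0 ≤ δ) (hδ1 : δ ≤ 1) (hν : 0 ≤ ν)
    (p : ℕ) :
    ((⌈δ * p⌉₊ ! : ℕ) : ℝ) ^ ν ≤ ((8 : ℝ) ^ ν * exp ν) ^ p * (p ! : ℝ) ^ (δ * ν) := by
  have h2e : 0 ≤ 2 * exp 1 := by positivity
  calc ((⌈δ * p⌉₊ ! : ℕ) : ℝ) ^ ν ≤ ((2 * exp 1) ^ p * (p ! : ℝ) ^ δ) ^ ν :=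
        rpow_le_rpow (Nat.cast_nonneg _) (factorial_natCeil_mul_le hδ0 hδ1 p) hν
    _ = ((2 * exp 1) ^ ν) ^ p * (p ! : ℝ) ^ (δ * ν) := by
        rw [mul_rpow (by positivity) (by positivity), ← rpow_natCast, ← rpow_natCast,
          ← rpow_mul h2e, ← rpow_mul h2e, ← rpow_mul (Nat.cast_nonneg _), mul_comm (p : ℝ)]
    _ ≤ ((8 : ℝ) ^ ν * exp ν) ^ p * (p ! : ℝ) ^ (δ * ν) := by
        rw [mul_rpow (by norm_num) (exp_pos 1).le, exp_one_rpow]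
        gcongr
        norm_num

lemma one_le_jap {d : ℕ} (x : Esp d) : 1 ≤ jap x :=
  Real.one_le_sqrt.mpr (le_add_of_nonneg_right (sq_nonneg _))

lemma eLpNorm_jap_rpow_mul_le {d : ℕ} (s : ℝ) (g : Esp d → ℂ) (μ : Measure (Esp d)) :
    eLpNorm (fun x => ((jap x ^ s : ℝ) : ℂ) * g x) 2 μ ≤
      eLpNorm (fun x => ((jap x ^ ⌈s⌉₊ : ℝ) : ℂ) * g x) 2 μ := by
  refine eLpNorm_mono fun x => ?_
  have hjap := one_le_jap x
  simp only [norm_mul, Complex.norm_real, Real.norm_eq_abs,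
    abs_of_nonneg (rpow_nonneg (zero_le_one.trans hjap) _),
    abs_of_nonneg (pow_nonneg (zero_le_one.trans hjap) _)]
  gcongr
  rw [← rpow_natCast]
  exact rpow_le_rpow_of_exponent_le hjap (Nat.le_ceil s)

theorem stmt_10_general (d : ℕ) (μ ν : ℝ) (hν : 0 < ν)
    (δ : ℝ) (hδ0 : 0 ≤ δ) (hδ1 : δ ≤ 1) (C A : ℝ) (hC : 0 < C) (hA : 1 ≤ A)
    (f : Esp d → ℂ)
    (hbound : ∀ (p : ℕ) (β : Fin d → ℕ),
      eLpNorm (fun x => ((jap x ^ p : ℝ) : ℂ) * mderiv β f x) 2 volume ≤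
        ENNReal.ofReal (C * A ^ (p + ∑ i, β i) *
          (p.factorial : ℝ) ^ ν * (((∑ i, β i).factorial : ℝ)) ^ μ)) :
    ∀ (p : ℕ) (β : Fin d → ℕ),
      eLpNorm (fun x => ((jap x ^ (δ * p) : ℝ) : ℂ) * mderiv β f x) 2 volume ≤
        ENNReal.ofReal (C * ((8 : ℝ) ^ ν * Real.exp ν * A) ^ (p + ∑ i, β i) *
          (p.factorial : ℝ) ^ (δ * ν) * (((∑ i, β i).factorial : ℝ)) ^ μ) := by
  intro p β
  set q := ⌈δ * p⌉₊
  set B := ∑ i, β i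
  have hqp : q ≤ p := natCeil_mul_le hδ1 p
  have hK : 1 ≤ (8 : ℝ) ^ ν * exp ν :=
    one_le_mul_of_one_le_of_one_le (one_le_rpow (by norm_num) hν.le) (one_le_exp hν.le)
  refine (eLpNorm_jap_rpow_mul_le _ _ _).trans <| (hbound q β).trans <|
    ENNReal.ofReal_le_ofReal ?_
  calc C * A ^ (q + B) * ((q ! : ℕ) : ℝ) ^ ν * (B ! : ℝ) ^ μ
      ≤ C * A ^ (p + B) * (((8 : ℝ) ^ ν * exp ν) ^ (p + B) * (p ! : ℝ) ^ (δ * ν)) *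
          (B ! : ℝ) ^ μ := by
        gcongr
        refine (factorial_natCeil_mul_rpow_le hδ0 hδ1 hν.le p).trans ?_
        gcongr
        exact Nat.le_add_right p B
    _ = C * ((8 : ℝ) ^ ν * exp ν * A) ^ (p + B) * (p ! : ℝ) ^ (δ * ν) * (B ! : ℝ) ^ μ := by
        rw [mul_pow]; ring

/-- Lemma `interpolation`: fractional powers of the Japanese bracket. -/
theorem stmt_10 (d : ℕ) (hd : 1 ≤ d) (μ ν : ℝ) (hμ : 0 < μ) (hν : 0 < ν) (hμν : 1 ≤ μ + ν)
    (δ : ℝ) (hδ0 : 0 ≤ δ) (hδ1 : δ ≤ 1) (C A : ℝ) (hC : 0 < C) (hA : 1 ≤ A)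
    (f : Esp d → ℂ) (hf : ContDiff ℝ (⊤ : ℕ∞) f)
    (hbound : ∀ (p : ℕ) (β : Fin d → ℕ),
      eLpNorm (fun x => ((jap x ^ p : ℝ) : ℂ) * mderiv β f x) 2 volume ≤
        ENNReal.ofReal (C * A ^ (p + ∑ i, β i) *
          (p.factorial : ℝ) ^ ν * (((∑ i, β i).factorial : ℝ)) ^ μ)) :
    ∀ (p : ℕ) (β : Fin d → ℕ),
      eLpNorm (fun x => ((jap x ^ (δ * p) : ℝ) : ℂ) * mderiv β f x) 2 volume ≤
        ENNReal.ofReal (C * ((8 : ℝ) ^ ν * Real.exp ν * A) ^ (p + ∑ i, β i) *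
          (p.factorial : ℝ) ^ (δ * ν) * (((∑ i, β i).factorial : ℝ)) ^ μ) :=
  stmt_10_general d μ ν hν δ hδ0 hδ1 C A hC hA f hbound

end
end

section
/- Let 0 < s ≤ 1, A ≥ 1 and let M_s = (A^p (p!)^s)_{p∈ℕ}. Then: (i) if 0 < s < 1, for all 0 < t ≤ 1 and r > 0 one has n_{t,M_s,r} ≤ 2^{1/(1−s)}(1 − log t + (Ar)^{1/(1−s)}); (ii) if s = 1, for all 0 < t ≤ 1 and r > 0 one has n_{t,M_1,r} ≤ (1 − log t) e^{Ar}; (iii) for every p ≥ 1, 0 ≤ γ_{M_s}(p) ≤ s. -/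
open MeasureTheory Filter
open scoped ENNReal NNReal

noncomputable section

/-- The Gevrey-type sequence `M_s = (A^p (p!)^s)_p`. -/
def gevreySeq (A s : ℝ) (p : ℕ) : ℝ := A ^ p * (p.factorial : ℝ) ^ s

/-! For `M = M_s` one has `M_{n-1}/M_n = 1/(A n^s)` and `M_{j+1}M_{j-1}/M_j² = (1 + 1/j)^s`.
Everything rests on Bernoulli's inequality `(1 + x)^p ≤ 1 + p x` for `0 ≤ p ≤ 1`: it bounds
`j((1 + 1/j)^s - 1)` by `s`, and it gives `(n+1)^{1-s} - n^{1-s} ≤ (1-s) n^{-s}` (for `s = 1`, the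
analogue is `log (n+1) - log n ≤ 1/n`). Hence the Bang sum over `m ≤ n ≤ N`, `m = ⌊-log t⌋ + 1`,
telescopes to at least `((N+1)^{1-s} - m^{1-s}) / ((1-s)A)` (resp. `log ((N+1)/m) / A`); as it is
`< r`, solving for `N` gives the bounds on the Bang degree. -/

section Elementary

open Real

lemma mul_one_add_inv_rpow_sub_one_le {x p : ℝ} (hx : 0 < x) (hp0 : 0 ≤ p) (hp1 : p ≤ 1) :
    x * ((1 + x⁻¹) ^ p - 1) ≤ p := by
  have bernoulli : (1 + x⁻¹) ^ p ≤ 1 + p * x⁻¹ :=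
    rpow_one_add_le_one_add_mul_self (by linarith [inv_pos.2 hx]) hp0 hp1
  calc x * ((1 + x⁻¹) ^ p - 1) ≤ x * (p * x⁻¹) := by gcongr; linarith
    _ = p := by field_simp

lemma add_one_rpow_sub_rpow_le {x p : ℝ} (hx : 0 < x) (hp0 : 0 ≤ p) (hp1 : p ≤ 1) :
    (x + 1) ^ p - x ^ p ≤ p * x ^ (p - 1) := by
  have hsplit : (x + 1) ^ p - x ^ p = x ^ (p - 1) * (x * ((1 + x⁻¹) ^ p - 1)) := by
    rw [show x + 1 = x * (1 + x⁻¹) by field_simp, mul_rpow hx.le (by positivity),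
      rpow_sub_one hx.ne']
    field_simp
  rw [hsplit, mul_comm p]
  exact mul_le_mul_of_nonneg_left (mul_one_add_inv_rpow_sub_one_le hx hp0 hp1)
    (rpow_nonneg hx.le _)

lemma log_add_one_sub_log_le {x : ℝ} (hx : 0 < x) : log (x + 1) - log x ≤ x⁻¹ := by
  rw [← log_div (by positivity) hx.ne']
  calc log ((x + 1) / x) ≤ (x + 1) / x - 1 := log_le_sub_one_of_pos (by positivity)
    _ = x⁻¹ := by field_simp; ring

lemma add_rpow_le_two_rpow_mul_add {x y q : ℝ} (hx : 0 ≤ x) (hy : 0 ≤ y) (hq : 0 ≤ q) :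
    (x + y) ^ q ≤ 2 ^ q * (x ^ q + y ^ q) := by
  wlog hxy : x ≤ y generalizing x y
  · rw [add_comm x, add_comm (x ^ q)]
    exact this hy hx (by linarith)
  calc (x + y) ^ q ≤ (2 * y) ^ q := rpow_le_rpow (by positivity) (by linarith) hq
    _ = 2 ^ q * y ^ q := mul_rpow zero_le_two hy
    _ ≤ 2 ^ q * (x ^ q + y ^ q) := by
      gcongr
      linarith [rpow_nonneg hx q]

lemma natCast_floor_neg_log_add_one_le {t : ℝ} (ht0 : 0 < t) (ht1 : t ≤ 1) :
    ((⌊-log t⌋₊ + 1 : ℕ) : ℝ) ≤ 1 - log t := by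
  have := Nat.floor_le (neg_nonneg.2 (log_nonpos ht0.le ht1))
  push_cast
  linarith

end Elementary

lemma sub_le_sum_Icc_of_monotone {f a : ℕ → ℝ} (hf : Monotone f) {m : ℕ}
    (hstep : ∀ n, m ≤ n → f (n + 1) - f n ≤ a n) (N : ℕ) :
    f (N + 1) - f m ≤ ∑ n ∈ Finset.Icc m N, a n := by
  rcases lt_or_ge N m with hNm | hmN
  · rw [Finset.Icc_eq_empty_of_lt hNm, Finset.sum_empty, sub_nonpos]
    exact hf hNm
  · rw [← Finset.sum_Icc_sub hmN]
    exact Finset.sum_le_sum fun n hn => hstep n (Finset.mem_Icc.1 hn).1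

section BangDegree

variable {M : ℕ → ℝ} {t r B : ℝ}

lemma sum_Icc_ite_lt_eq (M : ℕ → ℝ) (x : ℝ) (N : ℕ) :
    (∑ n ∈ Finset.Icc 1 N, if x < (n : ℝ) then M (n - 1) / M n else 0) =
      ∑ n ∈ Finset.Icc (⌊x⌋₊ + 1) N, M (n - 1) / M n := by
  rw [← Finset.sum_filter]
  congr 1
  ext n
  simp only [Finset.mem_filter, Finset.mem_Icc]
  constructor
  · rintro ⟨⟨hn1, hnN⟩, hxn⟩
    exact ⟨(Nat.floor_lt' (by omega)).2 hxn, hnN⟩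
  · rintro ⟨hn, hnN⟩
    exact ⟨⟨by omega, hnN⟩, (Nat.floor_lt' (by omega)).1 hn⟩

lemma bangDeg_le (hr : 0 < r)
    (h : ∀ N : ℕ, ∑ n ∈ Finset.Icc (⌊-Real.log t⌋₊ + 1) N, M (n - 1) / M n < r → (N : ℝ) ≤ B) :
    (bangDeg M t r : ℝ) ≤ B := by
  set S := {N : ℕ | (∑ n ∈ Finset.Icc 1 N,
    if -Real.log t < (n : ℝ) then M (n - 1) / M n else 0) < r}
  have hS : ∀ N ∈ S, (N : ℝ) ≤ B := fun N hN => h N (by rwa [← sum_Icc_ite_lt_eq])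
  have hzero : 0 ∈ S := by simpa [S] using hr
  exact hS _ (Nat.sSup_mem ⟨0, hzero⟩ ⟨⌊B⌋₊, fun N hN => Nat.le_floor (hS N hN)⟩)

lemma bangDeg_le_of_sub_le {f : ℕ → ℝ} {c : ℝ} (hr : 0 < r) (hc : 0 ≤ c) (hf : Monotone f)
    (hstep : ∀ n, 1 ≤ n → f (n + 1) - f n ≤ c * (M (n - 1) / M n))
    (hB : ∀ N : ℕ, f (N + 1) ≤ f (⌊-Real.log t⌋₊ + 1) + c * r → (N : ℝ) ≤ B) :
    (bangDeg M t r : ℝ) ≤ B := by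
  refine bangDeg_le hr fun N hN => hB N ?_
  have htel := sub_le_sum_Icc_of_monotone (m := ⌊-Real.log t⌋₊ + 1) hf
    (fun n hn => hstep n (by omega)) N
  rw [← Finset.mul_sum] at htel
  nlinarith

end BangDegree

lemma gammaM_mem_Icc {M : ℕ → ℝ} {p : ℕ} {c : ℝ} (hp : 1 ≤ p)
    (h : ∀ j, 1 ≤ j → j ≤ p → (j : ℝ) * (M (j + 1) * M (j - 1) / M j ^ 2 - 1) ∈ Set.Icc 0 c) :
    gammaM M p ∈ Set.Icc 0 c := by
  have hterm := fun j : {j : ℕ // 1 ≤ j ∧ j ≤ p} => h j j.2.1 j.2.2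
  have : Nonempty {j : ℕ // 1 ≤ j ∧ j ≤ p} := ⟨⟨1, le_rfl, hp⟩⟩
  refine ⟨?_, ciSup_le fun j => (hterm j).2⟩
  exact (hterm ⟨1, le_rfl, hp⟩).1.trans
    (le_ciSup ⟨c, Set.forall_mem_range.2 fun j => (hterm j).2⟩ _)

section Gevrey

variable {A s t r : ℝ}

lemma gevreySeq_pos (hA : 0 < A) (n : ℕ) : 0 < gevreySeq A s n := by
  unfold gevreySeq
  have := n.factorial_pos
  positivity

lemma gevreySeq_succ (A s : ℝ) (n : ℕ) :
    gevreySeq A s (n + 1) = A * ((n : ℝ) + 1) ^ s * gevreySeq A s n := by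
  simp only [gevreySeq, Nat.factorial_succ, Nat.cast_mul, Nat.cast_succ, pow_succ]
  rw [Real.mul_rpow (by positivity) (by positivity)]
  ring

lemma gevreySeq_pred_div (hA : 0 < A) {n : ℕ} (hn : n ≠ 0) :
    gevreySeq A s (n - 1) / gevreySeq A s n = (A * (n : ℝ) ^ s)⁻¹ := by
  obtain ⟨k, rfl⟩ := Nat.exists_eq_add_one_of_ne_zero hn
  have := gevreySeq_pos (s := s) hA k
  rw [Nat.add_sub_cancel, gevreySeq_succ, Nat.cast_succ]
  field_simp

lemma gevreySeq_succ_mul_pred_div_sq (hA : 0 < A) {j : ℕ} (hj : j ≠ 0) :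
    gevreySeq A s (j + 1) * gevreySeq A s (j - 1) / gevreySeq A s j ^ 2 = (1 + (j : ℝ)⁻¹) ^ s := by
  obtain ⟨k, rfl⟩ := Nat.exists_eq_add_one_of_ne_zero hj
  have := gevreySeq_pos (s := s) hA k
  have hk : (0 : ℝ) < (k : ℝ) + 1 := by positivity
  have hbase : 1 + ((k + 1 : ℕ) : ℝ)⁻¹ = ((k : ℝ) + 1 + 1) / ((k : ℝ) + 1) := by
    push_cast; field_simp
  rw [Nat.add_sub_cancel, gevreySeq_succ, gevreySeq_succ, hbase, Real.div_rpow (by positivity)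
    hk.le]
  push_cast
  have : 0 < ((k : ℝ) + 1) ^ s := Real.rpow_pos_of_pos hk s
  field_simp

lemma gammaM_gevreySeq_mem_Icc (hA : 0 < A) (hs0 : 0 ≤ s) (hs1 : s ≤ 1) {p : ℕ} (hp : 1 ≤ p) :
    gammaM (gevreySeq A s) p ∈ Set.Icc 0 s := by
  refine gammaM_mem_Icc hp fun j hj _ => ?_
  have hj0 : (0 : ℝ) < j := by exact_mod_cast hj
  rw [gevreySeq_succ_mul_pred_div_sq hA (by omega)]
  refine ⟨mul_nonneg hj0.le (sub_nonneg.2 (Real.one_le_rpow ?_ hs0)),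
    mul_one_add_inv_rpow_sub_one_le hj0 hs0 hs1⟩
  linarith [inv_pos.2 hj0]

lemma bangDeg_gevreySeq_le_of_lt_one (hA : 0 < A) (hs0 : 0 ≤ s) (hs1 : s < 1) (ht0 : 0 < t)
    (ht1 : t ≤ 1) (hr : 0 < r) :
    (bangDeg (gevreySeq A s) t r : ℝ) ≤
      2 ^ (1 / (1 - s)) * (1 - Real.log t + (A * r) ^ (1 / (1 - s))) := by
  set p := 1 - s
  have hp : 0 < p := by linarith
  refine bangDeg_le_of_sub_le (f := fun n => (n : ℝ) ^ p) (c := p * A) hr (by positivity)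
    (fun a b hab => Real.rpow_le_rpow (Nat.cast_nonneg a) (by exact_mod_cast hab) hp.le)
    (fun n hn => ?_) (fun N hN => ?_)
  · have hn0 : (0 : ℝ) < n := by exact_mod_cast hn
    rw [gevreySeq_pred_div hA (by omega)]
    push_cast
    calc ((n : ℝ) + 1) ^ p - (n : ℝ) ^ p ≤ p * (n : ℝ) ^ (p - 1) :=
          add_one_rpow_sub_rpow_le hn0 hp.le (by linarith)
      _ = p * A * (A * (n : ℝ) ^ s)⁻¹ := by
          rw [show p - 1 = -s by ring, Real.rpow_neg hn0.le]
          field_simp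
  · set m : ℕ := ⌊-Real.log t⌋₊ + 1
    push_cast at hN
    have hAr : 0 < A * r := by positivity
    calc (N : ℝ) ≤ ((m : ℝ) ^ p + A * r) ^ p⁻¹ := by
          rw [Real.le_rpow_inv_iff_of_pos (by positivity) (by positivity) hp]
          calc (N : ℝ) ^ p ≤ ((N : ℝ) + 1) ^ p :=
                Real.rpow_le_rpow (by positivity) (by linarith) hp.le
            _ ≤ (m : ℝ) ^ p + A * r := by nlinarith
      _ ≤ 2 ^ p⁻¹ * (((m : ℝ) ^ p) ^ p⁻¹ + (A * r) ^ p⁻¹) :=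
          add_rpow_le_two_rpow_mul_add (by positivity) hAr.le (by positivity)
      _ ≤ 2 ^ (1 / p) * (1 - Real.log t + (A * r) ^ (1 / p)) := by
          rw [Real.rpow_rpow_inv (by positivity) hp.ne', one_div]
          gcongr
          exact natCast_floor_neg_log_add_one_le ht0 ht1

lemma bangDeg_gevreySeq_one_le (hA : 0 < A) (ht0 : 0 < t) (ht1 : t ≤ 1) (hr : 0 < r) :
    (bangDeg (gevreySeq A 1) t r : ℝ) ≤ (1 - Real.log t) * Real.exp (A * r) := by
  refine bangDeg_le_of_sub_le (f := fun n => Real.log n) (c := A) hr hA.le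
    (fun a b hab => ?_) (fun n hn => ?_) (fun N hN => ?_)
  · rcases Nat.eq_zero_or_pos a with rfl | ha
    · simpa using Real.log_natCast_nonneg b
    · exact Real.log_le_log (by exact_mod_cast ha) (by exact_mod_cast hab)
  · have hn0 : (0 : ℝ) < n := by exact_mod_cast hn
    rw [gevreySeq_pred_div hA (by omega), Real.rpow_one]
    push_cast
    calc Real.log ((n : ℝ) + 1) - Real.log n ≤ (n : ℝ)⁻¹ := log_add_one_sub_log_le hn0
      _ = A * (A * n)⁻¹ := by field_simp
  · set m : ℕ := ⌊-Real.log t⌋₊ + 1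
    have hm0 : (0 : ℝ) < m := by positivity
    push_cast at hN
    rw [Real.log_le_iff_le_exp (by positivity), Real.exp_add, Real.exp_log hm0] at hN
    calc (N : ℝ) ≤ m * Real.exp (A * r) := by linarith
      _ ≤ (1 - Real.log t) * Real.exp (A * r) := by
          gcongr
          exact natCast_floor_neg_log_add_one_le ht0 ht1

end Gevrey

/-- Lemma `ex_qa_sequence`: quantitative bounds on the Bang degree and on `γ_M`
for the sequences `M_s = (A^p (p!)^s)_p`. -/
theorem stmt_11 (s A : ℝ) (hs0 : 0 < s) (hs1 : s ≤ 1) (hA : 1 ≤ A) :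
    (s < 1 → ∀ t r : ℝ, 0 < t → t ≤ 1 → 0 < r →
      (bangDeg (gevreySeq A s) t r : ℝ) ≤
        2 ^ (1 / (1 - s)) * (1 - Real.log t + (A * r) ^ (1 / (1 - s)))) ∧
    (s = 1 → ∀ t r : ℝ, 0 < t → t ≤ 1 → 0 < r →
      (bangDeg (gevreySeq A s) t r : ℝ) ≤ (1 - Real.log t) * Real.exp (A * r)) ∧
    (∀ p : ℕ, 1 ≤ p → 0 ≤ gammaM (gevreySeq A s) p ∧ gammaM (gevreySeq A s) p ≤ s) := by
  have hA0 : 0 < A := by linarith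
  refine ⟨fun hs t r ht0 ht1 hr => bangDeg_gevreySeq_le_of_lt_one hA0 hs0.le hs ht0 ht1 hr, ?_,
    fun p hp => gammaM_gevreySeq_mem_Icc hA0 hs0.le hs1 hp⟩
  rintro rfl t r ht0 ht1 hr
  exact bangDeg_gevreySeq_one_le hA0 ht0 ht1 hr
end
end
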